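/- Let m ≥ n and let Ã ∈ ℝ^{m×n} have nonzero columns. If obliq(Ã) ≤ θ for some θ < 1, then Ã·D(Ã) has full rank and κ₂ᴰ(Ã) ≤ (1 + θ)/(1 − θ). -/

import Mathlib

/-!
Write `B = A·D(A)` and let `U` be the orthogonal polar factor. Since `U` is an isometry and
`‖B - U‖₂ ≤ θ`, the reverse triangle inequality gives `(1 - θ)‖x‖ ≤ ‖Bx‖ ≤ (1 + θ)‖x‖` for every
`x`. Bounds on the quadratic form of `BᵀB` are bounds on its eigenvalues, so every singular value
of `B` lies in `[1 - θ, 1 + θ]`: all of them are positive, hence `B` has full column rank, and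
`σ_max(B) / σ_min(B) ≤ (1 + θ) / (1 - θ)`.
-/

open scoped BigOperators
open Matrix

/-- Euclidean norm of a vector in `ℝ^m`. -/
noncomputable def vecNorm {m : ℕ} (v : Fin m → ℝ) : ℝ :=
  Real.sqrt (∑ i, v i ^ 2)

theorem Matrix.isHermitian_transpose_mul_self {m n : ℕ} (A : Matrix (Fin m) (Fin n) ℝ) :
    (Aᵀ * A).IsHermitian := by
  simpa [Matrix.conjTranspose_eq_transpose_of_trivial] using
    Matrix.isHermitian_conjTranspose_mul_self A

/-- The `k`-th largest singular value of a real `m × n` matrix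
(`k = 0` gives the largest). -/
noncomputable def sval {m n : ℕ} (A : Matrix (Fin m) (Fin n) ℝ) (k : Fin n) : ℝ :=
  Real.sqrt
    (((Matrix.isHermitian_transpose_mul_self A).eigenvalues ∘
      Tuple.sort (Matrix.isHermitian_transpose_mul_self A).eigenvalues) k.rev)

/-- Spectral norm: the largest singular value. -/
noncomputable def specNorm {m n : ℕ} (A : Matrix (Fin m) (Fin n) ℝ) : ℝ :=
  ⨆ k, sval A k

/-- Smallest singular value. -/
noncomputable def sMin {m n : ℕ} (A : Matrix (Fin m) (Fin n) ℝ) : ℝ :=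
  ⨅ k, sval A k

/-- Frobenius norm. -/
noncomputable def frobNorm {m n : ℕ} (A : Matrix (Fin m) (Fin n) ℝ) : ℝ :=
  Real.sqrt (∑ i, ∑ j, (A i j) ^ 2)

/-- Frobenius norm of the off-diagonal part of a square matrix. -/
noncomputable def offF {n : ℕ} (M : Matrix (Fin n) (Fin n) ℝ) : ℝ :=
  frobNorm (M - Matrix.diagonal (fun i => M i i))

/-- Diagonal matrix of inverse column norms `D(A)`. -/
noncomputable def colScale {m n : ℕ} (A : Matrix (Fin m) (Fin n) ℝ) :
    Matrix (Fin n) (Fin n) ℝ :=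
  Matrix.diagonal (fun j => (vecNorm (fun i => A i j))⁻¹)

/-- Condition number `κ₂(A) = σ_max(A) / σ_min(A)`. -/
noncomputable def kappa2 {m n : ℕ} (A : Matrix (Fin m) (Fin n) ℝ) : ℝ :=
  specNorm A / sMin A

/-- One-sided scaled condition number `κ₂ᴰ(A) = κ₂(A · D(A))`. -/
noncomputable def scaledCond {m n : ℕ} (A : Matrix (Fin m) (Fin n) ℝ) : ℝ :=
  kappa2 (A * colScale A)

/-- Entrywise absolute value of a matrix. -/
def matAbs {m n : ℕ} (A : Matrix (Fin m) (Fin n) ℝ) : Matrix (Fin m) (Fin n) ℝ :=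
  fun i j => |A i j|

namespace Matrix.IsHermitian

variable {n : Type*} [Fintype n] [DecidableEq n] {M : Matrix n n ℝ}

lemma forall_eigenvalues_iff (hM : M.IsHermitian) (p : ℝ → Prop) :
    (∀ i, p (hM.eigenvalues i)) ↔ ∀ s ∈ spectrum ℝ M, p s := by
  simp [hM.spectrum_real_eq_range_eigenvalues]

lemma eigenvalues_le_iff (hM : M.IsHermitian) (b : ℝ) :
    (∀ i, hM.eigenvalues i ≤ b) ↔ ∀ x, x ⬝ᵥ (M *ᵥ x) ≤ b * (x ⬝ᵥ x) := by
  have hN : (algebraMap ℝ (Matrix n n ℝ) b - M).IsHermitian :=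
    (isHermitian_diagonal _).sub hM
  calc (∀ i, hM.eigenvalues i ≤ b)
      ↔ ∀ t ∈ spectrum ℝ (algebraMap ℝ (Matrix n n ℝ) b - M), 0 ≤ t := by
        rw [hM.forall_eigenvalues_iff (· ≤ b), ← spectrum.singleton_sub_eq]
        simp
    _ ↔ (algebraMap ℝ (Matrix n n ℝ) b - M).PosSemidef := by
        simp [hN.posSemidef_iff_eigenvalues_nonneg, Pi.le_def, hN.forall_eigenvalues_iff]
    _ ↔ ∀ x, x ⬝ᵥ (M *ᵥ x) ≤ b * (x ⬝ᵥ x) := by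
        rw [posSemidef_iff_dotProduct_mulVec, and_iff_right hN]
        simp [sub_mulVec, Algebra.algebraMap_eq_smul_one, smul_mulVec, dotProduct_sub]

lemma le_eigenvalues_iff (hM : M.IsHermitian) (a : ℝ) :
    (∀ i, a ≤ hM.eigenvalues i) ↔ ∀ x, a * (x ⬝ᵥ x) ≤ x ⬝ᵥ (M *ᵥ x) := by
  have hN : (M - algebraMap ℝ (Matrix n n ℝ) a).IsHermitian :=
    hM.sub (isHermitian_diagonal _)
  calc (∀ i, a ≤ hM.eigenvalues i)
      ↔ ∀ t ∈ spectrum ℝ (M - algebraMap ℝ (Matrix n n ℝ) a), 0 ≤ t := by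
        rw [hM.forall_eigenvalues_iff (a ≤ ·), ← spectrum.sub_singleton_eq]
        simp
    _ ↔ (M - algebraMap ℝ (Matrix n n ℝ) a).PosSemidef := by
        simp [hN.posSemidef_iff_eigenvalues_nonneg, Pi.le_def, hN.forall_eigenvalues_iff]
    _ ↔ ∀ x, a * (x ⬝ᵥ x) ≤ x ⬝ᵥ (M *ᵥ x) := by
        rw [posSemidef_iff_dotProduct_mulVec, and_iff_right hN]
        simp [sub_mulVec, Algebra.algebraMap_eq_smul_one, smul_mulVec, dotProduct_sub]

end Matrix.IsHermitian

lemma Matrix.dotProduct_transpose_mul_self_mulVec {R m n : Type*} [CommSemiring R] [Fintype m]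
    [Fintype n] (A : Matrix m n R) (x : n → R) :
    x ⬝ᵥ ((Aᵀ * A) *ᵥ x) = (A *ᵥ x) ⬝ᵥ (A *ᵥ x) := by
  rw [← mulVec_mulVec, dotProduct_mulVec, vecMul_transpose]

section SingularValues

variable {m n : ℕ}

lemma vecNorm_sq (v : Fin m → ℝ) : vecNorm v ^ 2 = v ⬝ᵥ v := by
  rw [vecNorm, Real.sq_sqrt (Finset.sum_nonneg fun i _ => sq_nonneg (v i))]
  simp only [dotProduct, sq]

lemma vecNorm_eq_norm_toLp (v : Fin m → ℝ) :
    vecNorm v = ‖(WithLp.toLp 2 v : EuclideanSpace ℝ (Fin m))‖ := by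
  simp [vecNorm, EuclideanSpace.norm_eq]

lemma abs_vecNorm_sub_vecNorm_le (u v : Fin m → ℝ) :
    |vecNorm u - vecNorm v| ≤ vecNorm (u - v) := by
  simpa only [vecNorm_eq_norm_toLp, WithLp.toLp_sub] using abs_norm_sub_norm_le _ _

lemma vecNorm_mulVec_of_transpose_mul_self_eq_one {U : Matrix (Fin m) (Fin n) ℝ}
    (hU : Uᵀ * U = 1) (x : Fin n → ℝ) : vecNorm (U *ᵥ x) = vecNorm x := by
  have hsq : vecNorm (U *ᵥ x) ^ 2 = vecNorm x ^ 2 := by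
    rw [vecNorm_sq, vecNorm_sq, ← dotProduct_transpose_mul_self_mulVec, hU, one_mulVec]
  exact (pow_left_inj₀ (Real.sqrt_nonneg _) (Real.sqrt_nonneg _) two_ne_zero).1 hsq

variable (A : Matrix (Fin m) (Fin n) ℝ)

lemma forall_sval_iff (p : ℝ → Prop) :
    (∀ k, p (sval A k)) ↔ ∀ i, p √((isHermitian_transpose_mul_self A).eigenvalues i) :=
  (Fin.revPerm.trans (Tuple.sort (isHermitian_transpose_mul_self A).eigenvalues)).forall_congr
    fun {_} => Iff.rfl

lemma forall_sval_le_iff {b : ℝ} (hb : 0 ≤ b) :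
    (∀ k, sval A k ≤ b) ↔ ∀ x, vecNorm (A *ᵥ x) ≤ b * vecNorm x := by
  simp_rw [forall_sval_iff A (· ≤ b), Real.sqrt_le_left hb,
    (isHermitian_transpose_mul_self A).eigenvalues_le_iff, dotProduct_transpose_mul_self_mulVec,
    ← vecNorm_sq, ← mul_pow]
  exact forall_congr' fun x =>
    pow_le_pow_iff_left₀ (Real.sqrt_nonneg _) (mul_nonneg hb (Real.sqrt_nonneg _)) two_ne_zero

lemma forall_le_sval_iff {a : ℝ} (ha : 0 ≤ a) :
    (∀ k, a ≤ sval A k) ↔ ∀ x, a * vecNorm x ≤ vecNorm (A *ᵥ x) := by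
  have hA := isHermitian_transpose_mul_self A
  have hsqrt : ∀ i, a ≤ √(hA.eigenvalues i) ↔ a ^ 2 ≤ hA.eigenvalues i := fun i =>
    Real.le_sqrt ha <| hA.posSemidef_iff_eigenvalues_nonneg.1
      (by simpa using posSemidef_conjTranspose_mul_self A) i
  simp_rw [forall_sval_iff A (a ≤ ·), hsqrt, hA.le_eigenvalues_iff,
    dotProduct_transpose_mul_self_mulVec, ← vecNorm_sq, ← mul_pow]
  exact forall_congr' fun x =>
    pow_le_pow_iff_left₀ (mul_nonneg ha (Real.sqrt_nonneg _)) (Real.sqrt_nonneg _) two_ne_zero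

lemma sval_le_specNorm (k : Fin n) : sval A k ≤ specNorm A :=
  le_ciSup (Set.finite_range _).bddAbove k

lemma specNorm_nonneg : 0 ≤ specNorm A :=
  Real.iSup_nonneg fun _ => Real.sqrt_nonneg _

lemma rank_eq_of_forall_sval_pos (h : ∀ k, 0 < sval A k) : A.rank = n := by
  have hne : ∀ i, (isHermitian_transpose_mul_self A).eigenvalues i ≠ 0 := fun i =>
    (Real.sqrt_pos.1 ((forall_sval_iff A (0 < ·)).1 h i)).ne'
  rw [← rank_transpose_mul_self, (isHermitian_transpose_mul_self A).rank_eq_card_non_zero_eigs,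
    Fintype.card_congr (Equiv.subtypeUnivEquiv hne), Fintype.card_fin]

lemma kappa2_le_of_forall_sval_mem_Icc {a b : ℝ} (ha : 0 < a) (hb : 0 ≤ b)
    (h : ∀ k, sval A k ∈ Set.Icc a b) : kappa2 A ≤ b / a := by
  have hspec : specNorm A ≤ b := Real.iSup_le (fun k => (h k).2) hb
  rcases isEmpty_or_nonempty (Fin n) with hn | hn
  · rw [kappa2, specNorm, Real.iSup_of_isEmpty, zero_div]
    positivity
  · exact div_le_div₀ hb hspec ha (le_ciInf fun k => (h k).1)

lemma sval_mem_Icc_of_specNorm_sub_le {B U : Matrix (Fin m) (Fin n) ℝ}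
    (hU : Uᵀ * U = 1) {θ : ℝ} (hθ : θ ≤ 1) (h : specNorm (B - U) ≤ θ) (k : Fin n) :
    sval B k ∈ Set.Icc (1 - θ) (1 + θ) := by
  have hθ0 : 0 ≤ θ := (specNorm_nonneg _).trans h
  have hdiff : ∀ x, |vecNorm (B *ᵥ x) - vecNorm x| ≤ θ * vecNorm x := fun x =>
    calc |vecNorm (B *ᵥ x) - vecNorm x|
        = |vecNorm (B *ᵥ x) - vecNorm (U *ᵥ x)| := by
          rw [vecNorm_mulVec_of_transpose_mul_self_eq_one hU]
      _ ≤ vecNorm ((B - U) *ᵥ x) := sub_mulVec B U x ▸ abs_vecNorm_sub_vecNorm_le _ _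
      _ ≤ θ * vecNorm x :=
          (forall_sval_le_iff _ hθ0).1 (fun k => (sval_le_specNorm _ k).trans h) x
  refine ⟨(forall_le_sval_iff B (sub_nonneg.2 hθ)).2 (fun x => ?_) k,
    (forall_sval_le_iff B (by linarith)).2 (fun x => ?_) k⟩ <;>
  linarith [abs_le.1 (hdiff x)]

end SingularValues

theorem scaled_cond_bound_of_obliquity_general
    {m n : ℕ}
    (A : Matrix (Fin m) (Fin n) ℝ)
    (θ : ℝ) (hθ1 : θ < 1)
    (hobliq : ∃ (U : Matrix (Fin m) (Fin n) ℝ) (H : Matrix (Fin n) (Fin n) ℝ),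
      Uᵀ * U = 1 ∧ H.PosSemidef ∧ A * colScale A = U * H ∧
      specNorm (A * colScale A - U) ≤ θ) :
    (A * colScale A).rank = n ∧ scaledCond A ≤ (1 + θ) / (1 - θ) := by
  obtain ⟨U, -, hU, -, -, hBU⟩ := hobliq
  have hsval := sval_mem_Icc_of_specNorm_sub_le hU hθ1.le hBU
  have hθ0 : 0 ≤ θ := (specNorm_nonneg _).trans hBU
  have hgap : 0 < 1 - θ := sub_pos.2 hθ1
  exact ⟨rank_eq_of_forall_sval_pos _ fun k => hgap.trans_le (hsval k).1,
    kappa2_le_of_forall_sval_mem_Icc _ hgap (by linarith) hsval⟩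

/-- Proposition 3.5: a small obliquity bounds the one-sided scaled condition
number, `κ₂ᴰ(Ã) ≤ (1 + θ)/(1 − θ)`. -/
theorem scaled_cond_bound_of_obliquity
    {m n : ℕ} (hmn : n ≤ m)
    (A : Matrix (Fin m) (Fin n) ℝ)
    (hcols : ∀ j, (fun i => A i j) ≠ 0)
    (θ : ℝ) (hθ1 : θ < 1)
    (hobliq : ∃ (U : Matrix (Fin m) (Fin n) ℝ) (H : Matrix (Fin n) (Fin n) ℝ),
      Uᵀ * U = 1 ∧ H.PosSemidef ∧ A * colScale A = U * H ∧
      specNorm (A * colScale A - U) ≤ θ) :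
    (A * colScale A).rank = n ∧ scaledCond A ≤ (1 + θ) / (1 - θ) :=
  scaled_cond_bound_of_obliquity_general A θ hθ1 hobliq
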